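/- arXiv:2412.20615 — 6 statements merged into one kernel-verified Lean document; each statement's English description precedes it below -/
import Mathlib

section
/- If λ is a partition of length ℓ and φ = (φ_1 ≤ … ≤ φ_ℓ) is a weakly increasing integer sequence satisfying φ_{i+1} − φ_i ≤ λ_i − λ_{i+1} + 1 for all 1 ≤ i < ℓ, then the sequence Δ defined by Δ_i = φ_i − min(φ_i, i − λ_i) is weakly decreasing and has all entries nonnegative. -/
/-- If λ is a partition of length ℓ and φ is a compatible flag, then
Δ_i = φ_i − min(φ_i, i − λ_i) is weakly decreasing with nonnegative entries. -/
theorem stmt0 (ℓ : ℕ) (lam φ : ℕ → ℤ)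
    (hpos : ∀ i, 1 ≤ i → i ≤ ℓ → 0 < lam i)
    (hdec : ∀ i, 1 ≤ i → i < ℓ → lam (i + 1) ≤ lam i)
    (hinc : ∀ i, 1 ≤ i → i < ℓ → φ i ≤ φ (i + 1))
    (hcomp : ∀ i, 1 ≤ i → i < ℓ → φ (i + 1) - φ i ≤ lam i - lam (i + 1) + 1) :
    (∀ i, 1 ≤ i → i ≤ ℓ → 0 ≤ φ i - min (φ i) ((i : ℤ) - lam i)) ∧
    (∀ i, 1 ≤ i → i < ℓ →
      φ (i + 1) - min (φ (i + 1)) (((i : ℤ) + 1) - lam (i + 1)) ≤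
        φ i - min (φ i) ((i : ℤ) - lam i)) := by
  constructor
  · intro i h1 h2
    simp [min_le_left]
  · intro i h1 h2
    have := hcomp i h1 h2
    have := hinc i h1 h2
    have := hdec i h1 h2
    rcases le_total (φ (i+1)) (((i:ℤ)+1) - lam (i+1)) with h | h <;>
      rcases le_total (φ i) ((i:ℤ) - lam i) with h' | h' <;>
      simp [min_eq_left, min_eq_right, h, h'] <;> omega
end

section
/- For partitions μ ⊆ λ and any semistandard set-valued tableau T of shape λ with entries finite nonempty subsets of ℤ, let T₋ denote the restriction to the nonpositive values and T₊ the restriction to the positive values. Then the map T ↦ (T₋, T₊) is a bijection from semistandard set-valued tableaux of shape λ with row bound flag φ onto the disjoint union over partitions μ ⊆ ν ⊆ λ with ν/μ disconnected of pairs consisting of a semistandard set-valued tableau of shape ν with nonpositive entries bounded row-wise by φ⁻ and a semistandard set-valued tableau of skew shape λ/μ with positive entries bounded row-wise by φ⁺. -/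
/-- Cell (r,c) (0-indexed) lies in the skew diagram λ/μ. -/
def cellIn (lam mu : ℕ → ℕ) (r c : ℕ) : Prop := mu r ≤ c ∧ c < lam r

/-- Semistandard set-valued tableau of skew shape λ/μ:
nonempty finite sets on cells, empty off cells, weakly increasing along rows,
strictly increasing down columns (in the max/min sense). -/
def IsSetSSYT (lam mu : ℕ → ℕ) (T : ℕ → ℕ → Finset ℤ) : Prop :=
  (∀ r c, cellIn lam mu r c → (T r c).Nonempty) ∧
  (∀ r c, ¬ cellIn lam mu r c → T r c = ∅) ∧
  (∀ r c, cellIn lam mu r c → cellIn lam mu r (c + 1) →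
    ∀ a ∈ T r c, ∀ b ∈ T r (c + 1), a ≤ b) ∧
  (∀ r c, cellIn lam mu r c → cellIn lam mu (r + 1) c →
    ∀ a ∈ T r c, ∀ b ∈ T (r + 1) c, a < b)

/-- Partition as a weakly decreasing, eventually zero function ℕ → ℕ. -/
def IsPartitionFn (lam : ℕ → ℕ) : Prop :=
  (∀ r, lam (r + 1) ≤ lam r) ∧ ∃ N, ∀ r, N ≤ r → lam r = 0

/-- Row bound by flag φ: every entry in row r is at most φ r. -/
def FlagBound (φ : ℕ → ℤ) (T : ℕ → ℕ → Finset ℤ) : Prop :=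
  ∀ r c, ∀ a ∈ T r c, a ≤ φ r

/-- The skew shape ν/μ is disconnected: no two cells are adjacent. -/
def DisconnectedSkew (nu mu : ℕ → ℕ) : Prop :=
  (∀ r c, ¬ (cellIn nu mu r c ∧ cellIn nu mu r (c + 1))) ∧
  (∀ r c, ¬ (cellIn nu mu r c ∧ cellIn nu mu (r + 1) c))


noncomputable def shapeLen (Q : ℕ → Prop) (n : ℕ) : ℕ :=
  @Nat.findGreatest (fun k => ∀ c < k, Q c) (Classical.decPred _) n

lemma shapeLen_le (Q : ℕ → Prop) (n : ℕ) : shapeLen Q n ≤ n := by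
  letI : DecidablePred fun k => ∀ c < k, Q c := Classical.decPred _
  unfold shapeLen
  exact Nat.findGreatest_le n

lemma lt_shapeLen_iff {Q : ℕ → Prop} {n : ℕ}
    (dc : ∀ c, c + 1 < n → Q (c + 1) → Q c) (c : ℕ) :
    c < shapeLen Q n ↔ c < n ∧ Q c := by
  letI : DecidablePred fun k => ∀ c < k, Q c := Classical.decPred _
  unfold shapeLen
  constructor
  · intro h
    exact ⟨lt_of_lt_of_le h (Nat.findGreatest_le n),
      Nat.findGreatest_spec (P := fun k => ∀ c < k, Q c) (Nat.zero_le n)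
        (fun c hc => absurd hc (Nat.not_lt_zero c)) c h⟩
  · rintro ⟨hn, hQ⟩
    have key : ∀ m, m < n → Q m → ∀ c' ≤ m, Q c' := by
      intro m
      induction m with
      | zero =>
        intro _ hQ0 c' hc'
        have hc0 : c' = 0 := Nat.le_zero.mp hc'
        subst hc0; exact hQ0
      | succ k ih =>
        intro hkn hQk c' hc'
        rcases Nat.eq_or_lt_of_le hc' with h | h
        · subst h; exact hQk
        · exact ih (by omega) (dc k hkn hQk) c' (by omega)
    exact Nat.lt_of_lt_of_le (Nat.lt_succ_self c)
      (Nat.le_findGreatest (by omega)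
        (fun c' hc' => key c hn hQ c' (Nat.lt_succ_iff.mp hc')))

section Main

lemma le_of_all_lt {m k : ℕ} (h : ∀ c, c < m → c < k) : m ≤ k := by
  by_contra hk
  push_neg at hk
  exact lt_irrefl k (h k hk)

noncomputable def nuOf (lam : ℕ → ℕ) (T : ℕ → ℕ → Finset ℤ) (r : ℕ) : ℕ :=
  shapeLen (fun c => ∃ a ∈ T r c, a ≤ 0) (lam r)

noncomputable def muOf (lam : ℕ → ℕ) (T : ℕ → ℕ → Finset ℤ) (r : ℕ) : ℕ :=
  shapeLen (fun c => (T r c).Nonempty ∧ ∀ a ∈ T r c, a ≤ 0) (lam r)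

lemma lt_nuOf_iff {lam : ℕ → ℕ} {T : ℕ → ℕ → Finset ℤ}
    (hT : IsSetSSYT lam (fun _ => 0) T) (r c : ℕ) :
    c < nuOf lam T r ↔ c < lam r ∧ ∃ a ∈ T r c, a ≤ 0 := by
  apply lt_shapeLen_iff
  rintro c hc ⟨b, hb, hb0⟩
  obtain ⟨a, ha⟩ := hT.1 r c ⟨Nat.zero_le c, by omega⟩
  exact ⟨a, ha, le_trans
    (hT.2.2.1 r c ⟨Nat.zero_le c, by omega⟩ ⟨Nat.zero_le _, hc⟩ a ha b hb) hb0⟩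

lemma lt_muOf_iff {lam : ℕ → ℕ} {T : ℕ → ℕ → Finset ℤ}
    (hT : IsSetSSYT lam (fun _ => 0) T) (r c : ℕ) :
    c < muOf lam T r ↔ c < lam r ∧ (T r c).Nonempty ∧ ∀ a ∈ T r c, a ≤ 0 := by
  apply lt_shapeLen_iff
  rintro c hc ⟨⟨b, hb⟩, hall⟩
  have hne : (T r c).Nonempty := hT.1 r c ⟨Nat.zero_le c, by omega⟩
  refine ⟨hne, fun a ha => le_trans
    (hT.2.2.1 r c ⟨Nat.zero_le c, by omega⟩ ⟨Nat.zero_le _, hc⟩ a ha b hb) (hall b hb)⟩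

lemma forward {lam : ℕ → ℕ} (φ : ℕ → ℤ) (hlam : IsPartitionFn lam)
    (T : ℕ → ℕ → Finset ℤ) (hT : IsSetSSYT lam (fun _ => 0) T) (hF : FlagBound φ T) :
    ∃ nu mu : ℕ → ℕ, IsPartitionFn nu ∧ IsPartitionFn mu ∧
      (∀ r, mu r ≤ nu r) ∧ (∀ r, nu r ≤ lam r) ∧ DisconnectedSkew nu mu ∧
      IsSetSSYT nu (fun _ => 0) (fun r c => (T r c).filter (fun a => a ≤ 0)) ∧
      (∀ r c, ∀ a ∈ (T r c).filter (fun a => a ≤ 0), a ≤ 0) ∧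
      FlagBound (fun r => min (φ r) 0) (fun r c => (T r c).filter (fun a => a ≤ 0)) ∧
      IsSetSSYT lam mu (fun r c => (T r c).filter (fun a => 0 < a)) ∧
      (∀ r c, ∀ a ∈ (T r c).filter (fun a => 0 < a), 0 < a) ∧
      FlagBound (fun r => max (φ r) 0) (fun r c => (T r c).filter (fun a => 0 < a)) := by
  classical
  have hnul : ∀ r, nuOf lam T r ≤ lam r := fun r => shapeLen_le _ _
  have hmul : ∀ r, muOf lam T r ≤ lam r := fun r => shapeLen_le _ _
  -- key: mixed cells
  have hposexists : ∀ r c, muOf lam T r ≤ c → c < lam r → ∃ a ∈ T r c, 0 < a := by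
    intro r c hmc hcl
    have hne := hT.1 r c ⟨Nat.zero_le c, hcl⟩
    have hnot : ¬ (c < lam r ∧ (T r c).Nonempty ∧ ∀ a ∈ T r c, a ≤ 0) := by
      rw [← lt_muOf_iff hT]; omega
    push_neg at hnot
    obtain ⟨a, ha, ha0⟩ := hnot hcl hne
    exact ⟨a, ha, by omega⟩
  refine ⟨nuOf lam T, muOf lam T, ?_, ?_, ?_, hnul, ?_, ?_, ?_, ?_, ?_, ?_, ?_⟩
  · -- nu partition
    constructor
    · intro r
      apply le_of_all_lt
      intro c hc
      rw [lt_nuOf_iff hT] at hc ⊢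
      obtain ⟨hcl, b, hb, hb0⟩ := hc
      have hclr : c < lam r := lt_of_lt_of_le hcl (hlam.1 r)
      obtain ⟨a, ha⟩ := hT.1 r c ⟨Nat.zero_le c, hclr⟩
      exact ⟨hclr, a, ha, le_of_lt (lt_of_lt_of_le
        (hT.2.2.2 r c ⟨Nat.zero_le c, hclr⟩ ⟨Nat.zero_le c, hcl⟩ a ha b hb) hb0)⟩
    · obtain ⟨N, hN⟩ := hlam.2
      exact ⟨N, fun r hr => Nat.le_zero.mp (le_trans (hnul r) (le_of_eq (hN r hr)))⟩
  · -- mu partition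
    constructor
    · intro r
      apply le_of_all_lt
      intro c hc
      rw [lt_muOf_iff hT] at hc ⊢
      obtain ⟨hcl, ⟨b, hb⟩, hall⟩ := hc
      have hclr : c < lam r := lt_of_lt_of_le hcl (hlam.1 r)
      have hne := hT.1 r c ⟨Nat.zero_le c, hclr⟩
      refine ⟨hclr, hne, fun a ha => le_of_lt (lt_of_lt_of_le
        (hT.2.2.2 r c ⟨Nat.zero_le c, hclr⟩ ⟨Nat.zero_le c, hcl⟩ a ha b hb) (hall b hb))⟩
    · obtain ⟨N, hN⟩ := hlam.2
      exact ⟨N, fun r hr => Nat.le_zero.mp (le_trans (hmul r) (le_of_eq (hN r hr)))⟩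
  · -- mu ≤ nu
    intro r
    apply le_of_all_lt
    intro c hc
    rw [lt_muOf_iff hT] at hc
    rw [lt_nuOf_iff hT]
    obtain ⟨hcl, ⟨b, hb⟩, hall⟩ := hc
    exact ⟨hcl, b, hb, hall b hb⟩
  · -- disconnected
    constructor
    · rintro r c ⟨⟨h1, h2⟩, h3, h4⟩
      rw [lt_nuOf_iff hT] at h2 h4
      obtain ⟨b, hb, hb0⟩ := h4.2
      obtain ⟨a, ha, ha0⟩ := hposexists r c h1 h2.1
      have := hT.2.2.1 r c ⟨Nat.zero_le c, h2.1⟩ ⟨Nat.zero_le _, h4.1⟩ a ha b hb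
      omega
    · rintro r c ⟨⟨h1, h2⟩, h3, h4⟩
      rw [lt_nuOf_iff hT] at h2 h4
      obtain ⟨b, hb, hb0⟩ := h4.2
      obtain ⟨a, ha, ha0⟩ := hposexists r c h1 h2.1
      have := hT.2.2.2 r c ⟨Nat.zero_le c, h2.1⟩ ⟨Nat.zero_le _, h4.1⟩ a ha b hb
      omega
  · -- T₋ is SSYT of shape nu
    refine ⟨?_, ?_, ?_, ?_⟩
    · rintro r c ⟨-, hc⟩
      rw [lt_nuOf_iff hT] at hc
      obtain ⟨hcl, a, ha, ha0⟩ := hc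
      exact ⟨a, Finset.mem_filter.mpr ⟨ha, ha0⟩⟩
    · intro r c hc
      have hge : nuOf lam T r ≤ c := by
        by_contra h
        exact hc ⟨Nat.zero_le c, by omega⟩
      by_cases hcl : c < lam r
      · show Finset.filter _ (T r c) = ∅
        rw [Finset.filter_eq_empty_iff]
        intro a ha
        have hnot : ¬ (c < lam r ∧ ∃ a ∈ T r c, a ≤ 0) := by
          rw [← lt_nuOf_iff hT]; omega
        push_neg at hnot
        have := hnot hcl a ha
        omega
      · have h0 : T r c = ∅ := hT.2.1 r c (fun h => hcl h.2)
        show Finset.filter _ (T r c) = ∅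
        simp [h0]
    · rintro r c ⟨-, h1⟩ ⟨-, h2⟩ a ha b hb
      rw [lt_nuOf_iff hT] at h1 h2
      exact hT.2.2.1 r c ⟨Nat.zero_le _, h1.1⟩ ⟨Nat.zero_le _, h2.1⟩
        a (Finset.mem_filter.mp ha).1 b (Finset.mem_filter.mp hb).1
    · rintro r c ⟨-, h1⟩ ⟨-, h2⟩ a ha b hb
      rw [lt_nuOf_iff hT] at h1 h2
      exact hT.2.2.2 r c ⟨Nat.zero_le _, h1.1⟩ ⟨Nat.zero_le _, h2.1⟩
        a (Finset.mem_filter.mp ha).1 b (Finset.mem_filter.mp hb).1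
  · intro r c a ha
    exact (Finset.mem_filter.mp ha).2
  · intro r c a ha
    obtain ⟨ha, ha0⟩ := Finset.mem_filter.mp ha
    exact le_min (hF r c a ha) ha0
  · -- T₊ is SSYT of shape lam/mu
    refine ⟨?_, ?_, ?_, ?_⟩
    · rintro r c ⟨h1, h2⟩
      obtain ⟨a, ha, ha0⟩ := hposexists r c h1 h2
      exact ⟨a, Finset.mem_filter.mpr ⟨ha, ha0⟩⟩
    · intro r c hc
      rw [cellIn] at hc
      push_neg at hc
      by_cases hcl : c < lam r
      · have hcmu : c < muOf lam T r := by
          by_contra hx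
          push_neg at hx
          have := hc hx
          omega
        rw [lt_muOf_iff hT] at hcmu
        show Finset.filter _ (T r c) = ∅
        rw [Finset.filter_eq_empty_iff]
        intro a ha
        have := hcmu.2.2 a ha
        omega
      · have h0 : T r c = ∅ := hT.2.1 r c (fun h => hcl h.2)
        show Finset.filter _ (T r c) = ∅
        simp [h0]
    · rintro r c ⟨-, h1⟩ ⟨-, h2⟩ a ha b hb
      exact hT.2.2.1 r c ⟨Nat.zero_le _, h1⟩ ⟨Nat.zero_le _, h2⟩
        a (Finset.mem_filter.mp ha).1 b (Finset.mem_filter.mp hb).1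
    · rintro r c ⟨-, h1⟩ ⟨-, h2⟩ a ha b hb
      exact hT.2.2.2 r c ⟨Nat.zero_le _, h1⟩ ⟨Nat.zero_le _, h2⟩
        a (Finset.mem_filter.mp ha).1 b (Finset.mem_filter.mp hb).1
  · intro r c a ha
    exact (Finset.mem_filter.mp ha).2
  · intro r c a ha
    exact le_max_of_le_left (hF r c a (Finset.mem_filter.mp ha).1)

end Main


/-- The map T ↦ (T₋, T₊) is a bijection from φ-flagged semistandard set-valued
tableaux of shape λ onto pairs of a φ⁻-flagged nonpositive SSYT of shape ν and a
φ⁺-flagged positive SSYT of shape λ/μ, over μ ⊆ ν ⊆ λ with ν/μ disconnected. -/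
theorem stmt3 (lam : ℕ → ℕ) (φ : ℕ → ℤ)
    (hlam : IsPartitionFn lam) (hφ : ∀ r, φ r ≤ φ (r + 1)) :
    ∃ f : {T : ℕ → ℕ → Finset ℤ // IsSetSSYT lam (fun _ => 0) T ∧ FlagBound φ T} →
      {p : (ℕ → ℕ → Finset ℤ) × (ℕ → ℕ → Finset ℤ) //
        ∃ nu mu : ℕ → ℕ, IsPartitionFn nu ∧ IsPartitionFn mu ∧
          (∀ r, mu r ≤ nu r) ∧ (∀ r, nu r ≤ lam r) ∧ DisconnectedSkew nu mu ∧
          IsSetSSYT nu (fun _ => 0) p.1 ∧ (∀ r c, ∀ a ∈ p.1 r c, a ≤ 0) ∧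
          FlagBound (fun r => min (φ r) 0) p.1 ∧
          IsSetSSYT lam mu p.2 ∧ (∀ r c, ∀ a ∈ p.2 r c, 0 < a) ∧
          FlagBound (fun r => max (φ r) 0) p.2},
      (∀ T, (f T).val =
        (fun r c => (T.val r c).filter (fun a => a ≤ 0),
         fun r c => (T.val r c).filter (fun a => 0 < a))) ∧
      Function.Bijective f := by
  classical
  refine ⟨fun T => ⟨(fun r c => (T.val r c).filter (fun a => a ≤ 0),
      fun r c => (T.val r c).filter (fun a => 0 < a)),
      forward φ hlam T.val T.property.1 T.property.2⟩, fun T => rfl, ?_, ?_⟩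
  · -- injective
    intro T1 T2 h
    apply Subtype.ext
    funext r c
    have h1 : (T1.val r c).filter (fun a => a ≤ 0)
        = (T2.val r c).filter (fun a => a ≤ 0) :=
      congrFun (congrFun (congrArg (fun p => p.val.1) h) r) c
    have h2 : (T1.val r c).filter (fun a => 0 < a)
        = (T2.val r c).filter (fun a => 0 < a) :=
      congrFun (congrFun (congrArg (fun p => p.val.2) h) r) c
    have key : ∀ s : Finset ℤ,
        s.filter (fun a => a ≤ 0) ∪ s.filter (fun a => 0 < a) = s := by
      intro s
      ext a
      simp only [Finset.mem_union, Finset.mem_filter]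
      constructor
      · rintro (⟨h, _⟩ | ⟨h, _⟩) <;> exact h
      · intro h
        rcases le_or_gt a 0 with h' | h'
        · exact Or.inl ⟨h, h'⟩
        · exact Or.inr ⟨h, h'⟩
    rw [← key (T1.val r c), ← key (T2.val r c), h1, h2]
  · -- surjective
    rintro ⟨⟨A, B⟩, nu, mu, hnu, hmu, hmn, hnl, hdisc, hA, hAneg, hAflag, hB, hBpos, hBflag⟩
    have hAcell : ∀ r c a, a ∈ A r c → cellIn nu (fun _ => 0) r c := by
      intro r c a ha
      by_contra h
      have h0 : A r c = ∅ := hA.2.1 r c h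
      rw [h0] at ha
      exact absurd ha (Finset.notMem_empty a)
    have hBcell : ∀ r c a, a ∈ B r c → cellIn lam mu r c := by
      intro r c a ha
      by_contra h
      have h0 : B r c = ∅ := hB.2.1 r c h
      rw [h0] at ha
      exact absurd ha (Finset.notMem_empty a)
    have hT : IsSetSSYT lam (fun _ => 0) (fun r c => A r c ∪ B r c) := by
      refine ⟨?_, ?_, ?_, ?_⟩
      · rintro r c ⟨-, hcl⟩
        by_cases h : cellIn nu (fun _ => 0) r c
        · obtain ⟨a, ha⟩ := hA.1 r c h
          exact ⟨a, Finset.mem_union_left _ ha⟩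
        · have hge : nu r ≤ c := by
            by_contra hx
            exact h ⟨Nat.zero_le c, by omega⟩
          obtain ⟨a, ha⟩ := hB.1 r c ⟨le_trans (hmn r) hge, hcl⟩
          exact ⟨a, Finset.mem_union_right _ ha⟩
      · intro r c h
        rw [cellIn] at h
        push_neg at h
        have hcl : lam r ≤ c := h (Nat.zero_le c)
        have hA0 : A r c = ∅ := hA.2.1 r c (by
          rintro ⟨-, hx⟩
          have := hnl r
          omega)
        have hB0 : B r c = ∅ := hB.2.1 r c (by
          rintro ⟨-, hx⟩
          omega)
        show A r c ∪ B r c = ∅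
        rw [hA0, hB0, Finset.union_empty]
      · intro r c hc1 hc2 a ha b hb
        rcases Finset.mem_union.mp ha with haA | haB <;>
          rcases Finset.mem_union.mp hb with hbA | hbB
        · exact hA.2.2.1 r c (hAcell _ _ _ haA) (hAcell _ _ _ hbA) a haA b hbA
        · have h1 := hAneg r c a haA
          have h2 := hBpos r (c + 1) b hbB
          omega
        · exfalso
          have hc1' := hAcell r (c + 1) b hbA
          have hc2' := hBcell r c a haB
          exact hdisc.1 r c ⟨⟨hc2'.1, by have := hc1'.2; omega⟩,
            ⟨by have := hc2'.1; omega, hc1'.2⟩⟩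
        · exact hB.2.2.1 r c (hBcell _ _ _ haB) (hBcell _ _ _ hbB) a haB b hbB
      · intro r c hc1 hc2 a ha b hb
        rcases Finset.mem_union.mp ha with haA | haB <;>
          rcases Finset.mem_union.mp hb with hbA | hbB
        · exact hA.2.2.2 r c (hAcell _ _ _ haA) (hAcell _ _ _ hbA) a haA b hbA
        · have h1 := hAneg r c a haA
          have h2 := hBpos (r + 1) c b hbB
          omega
        · exfalso
          have hc1' := hAcell (r + 1) c b hbA
          have hc2' := hBcell r c a haB
          exact hdisc.2 r c ⟨⟨hc2'.1, lt_of_lt_of_le hc1'.2 (hnu.1 r)⟩,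
            ⟨le_trans (hmu.1 r) hc2'.1, hc1'.2⟩⟩
        · exact hB.2.2.2 r c (hBcell _ _ _ haB) (hBcell _ _ _ hbB) a haB b hbB
    have hFl : FlagBound φ (fun r c => A r c ∪ B r c) := by
      intro r c a ha
      rcases Finset.mem_union.mp ha with haA | haB
      · exact le_trans (hAflag r c a haA) (min_le_left _ _)
      · have h1 := hBflag r c a haB
        have h2 := hBpos r c a haB
        rcases le_max_iff.mp h1 with h | h
        · exact h
        · omega
    refine ⟨⟨fun r c => A r c ∪ B r c, hT, hFl⟩, ?_⟩
    apply Subtype.ext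
    refine Prod.ext (funext fun r => funext fun c => ?_) (funext fun r => funext fun c => ?_)
    · show (A r c ∪ B r c).filter (fun a => a ≤ 0) = A r c
      rw [Finset.filter_union,
        Finset.filter_true_of_mem (fun a ha => hAneg r c a ha),
        Finset.filter_false_of_mem (fun a ha => by have := hBpos r c a ha; omega),
        Finset.union_empty]
    · show (A r c ∪ B r c).filter (fun a => 0 < a) = B r c
      rw [Finset.filter_union,
        Finset.filter_false_of_mem (fun a ha => by have := hAneg r c a ha; omega),
        Finset.filter_true_of_mem (fun a ha => hBpos r c a ha),
        Finset.empty_union]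
end

section
/- If μ ⊆ λ are partitions and the skew diagram λ/μ contains no cell (r,c) with r = c (a diagonal cell), then there exist partitions μ^U and μ^D with μ ⊆ μ^U, μ ⊆ μ^D, such that the cells of λ/μ^U and λ/μ^D partition the cells of λ/μ, every cell (r,c) of λ/μ^U satisfies r < c, and every cell (r,c) of λ/μ^D satisfies r > c. -/
/-- If the skew diagram λ/μ has no diagonal cell, it splits as the disjoint union
of λ/μᵁ (cells strictly above the diagonal) and λ/μᴰ (cells strictly below),
for partitions μᵁ, μᴰ containing μ. -/
theorem stmt5 (lam mu : ℕ → ℕ)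
    (hlam : IsPartitionFn lam) (hmu : IsPartitionFn mu)
    (hsub : ∀ r, mu r ≤ lam r)
    (hdiag : ∀ r c, cellIn lam mu r c → r ≠ c) :
    ∃ muU muD : ℕ → ℕ, IsPartitionFn muU ∧ IsPartitionFn muD ∧
      (∀ r, mu r ≤ muU r) ∧ (∀ r, mu r ≤ muD r) ∧
      (∀ r c, cellIn lam mu r c ↔ (cellIn lam muU r c ∨ cellIn lam muD r c)) ∧
      (∀ r c, ¬ (cellIn lam muU r c ∧ cellIn lam muD r c)) ∧
      (∀ r c, cellIn lam muU r c → r < c) ∧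
      (∀ r c, cellIn lam muD r c → c < r) := by
  obtain ⟨hlm, N, hN⟩ := hlam
  obtain ⟨hmm, M, hM⟩ := hmu
  -- each row is entirely below the diagonal (lam r ≤ r) or entirely above (r < mu r)
  have hd : ∀ r, lam r ≤ r ∨ r < mu r := by
    intro r
    by_cases h : mu r ≤ r
    · left
      by_contra hc
      exact hdiag r r ⟨h, by omega⟩ rfl
    · right; omega
  refine ⟨fun r => if r < mu r then mu r else lam r,
          fun r => if lam r ≤ r then mu r else lam r, ?_, ?_, ?_, ?_, ?_, ?_, ?_, ?_⟩
  · constructor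
    · intro r
      have h1 := hlm r; have h2 := hmm r; have h3 := hsub r
      have h4 := hsub (r+1); have h5 := hd (r+1)
      dsimp only; split_ifs <;> omega
    · refine ⟨max N M, fun r hr => ?_⟩
      have h1 := hN r (le_trans (le_max_left _ _) hr)
      have h2 := hM r (le_trans (le_max_right _ _) hr)
      dsimp only; split_ifs <;> omega
  · constructor
    · intro r
      have h1 := hlm r; have h2 := hmm r; have h3 := hsub r
      have h4 := hsub (r+1)
      dsimp only; split_ifs <;> omega
    · refine ⟨max N M, fun r hr => ?_⟩
      have h1 := hN r (le_trans (le_max_left _ _) hr)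
      have h2 := hM r (le_trans (le_max_right _ _) hr)
      dsimp only; split_ifs <;> omega
  · intro r; have := hsub r; dsimp only; split_ifs <;> omega
  · intro r; have := hsub r; dsimp only; split_ifs <;> omega
  · intro r c
    have h1 := hsub r; have h2 := hd r
    constructor
    · rintro ⟨ha, hb⟩
      unfold cellIn
      dsimp only; split_ifs <;> omega
    · rintro (⟨ha, hb⟩ | ⟨ha, hb⟩) <;> constructor <;>
        [skip; omega; skip; omega] <;>
      · revert ha; dsimp only; split_ifs <;> omega
  · rintro r c ⟨⟨ha, hb⟩, ⟨hc, hd'⟩⟩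
    have h1 := hsub r
    revert ha hc; dsimp only; split_ifs <;> omega
  · rintro r c ⟨ha, hb⟩
    have h1 := hsub r; have h2 := hd r
    revert ha; dsimp only; split_ifs <;> omega
  · rintro r c ⟨ha, hb⟩
    have h1 := hsub r
    revert ha; dsimp only; split_ifs <;> omega
end

section
/- In a semistandard set-valued tableau T of skew shape λ/μ, any two distinct pairs (cell, value) — i.e., (r,c) with i ∈ T(r,c) and (r',c') with i' ∈ T(r',c') where ((r,c),i) ≠ ((r',c'),i') — give different ordered weights (i, i + c − r) ≠ (i', i' + c' − r'). -/
lemma diag_strict (lam mu : ℕ → ℕ)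
    (hlam : ∀ r, lam (r + 1) ≤ lam r) (hmu : ∀ r, mu (r + 1) ≤ mu r)
    (T : ℕ → ℕ → Finset ℤ) (hT : IsSetSSYT lam mu T) :
    ∀ k r c, cellIn lam mu r c → cellIn lam mu (r + k + 1) (c + k + 1) →
      ∀ a ∈ T r c, ∀ b ∈ T (r + k + 1) (c + k + 1), a < b := by
  obtain ⟨hne, _, hrow, hcol⟩ := hT
  have hlam' : ∀ s t, s ≤ t → lam t ≤ lam s :=
    fun s t h => antitone_nat_of_succ_le hlam h
  have hmu' : ∀ s t, s ≤ t → mu t ≤ mu s :=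
    fun s t h => antitone_nat_of_succ_le hmu h
  have base : ∀ r c, cellIn lam mu r c → cellIn lam mu (r + 1) (c + 1) →
      ∀ a ∈ T r c, ∀ b ∈ T (r + 1) (c + 1), a < b := by
    intro r c hc hc' a ha b hb
    have hmid : cellIn lam mu (r + 1) c :=
      ⟨le_trans (hmu r) hc.1, lt_of_le_of_lt (Nat.le_succ c) hc'.2⟩
    obtain ⟨x, hx⟩ := hne _ _ hmid
    exact lt_of_lt_of_le (hcol r c hc hmid a ha x hx)
      (hrow (r + 1) c hmid hc' x hx b hb)
  intro k
  induction k with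
  | zero => intro r c hc hc' a ha b hb; exact base r c hc hc' a ha b hb
  | succ k ih =>
    intro r c hc hc' a ha b hb
    have hmid : cellIn lam mu (r + 1) (c + 1) := by
      refine ⟨le_trans (hmu r) (le_trans hc.1 (Nat.le_succ c)), ?_⟩
      have h1 : lam (r + (k + 1) + 1) ≤ lam (r + 1) := hlam' _ _ (by omega)
      have := hc'.2
      omega
    obtain ⟨x, hx⟩ := hne _ _ hmid
    have h1 : a < x := base r c hc hmid a ha x hx
    have h2 : x < b := by
      have := ih (r + 1) (c + 1) hmid (by convert hc' using 2 <;> omega) x hx b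
      have hb' : b ∈ T (r + 1 + k + 1) (c + 1 + k + 1) := by
        convert hb using 3 <;> omega
      exact this hb'
    exact h1.trans h2

/-- In a semistandard set-valued tableau of skew shape λ/μ, distinct (cell, value)
pairs have distinct ordered weights (i, i + c − r). -/
theorem stmt8 (lam mu : ℕ → ℕ)
    (hlam : ∀ r, lam (r + 1) ≤ lam r) (hmu : ∀ r, mu (r + 1) ≤ mu r)
    (hsub : ∀ r, mu r ≤ lam r)
    (T : ℕ → ℕ → Finset ℤ) (hT : IsSetSSYT lam mu T) :
    ∀ r c r' c' : ℕ, ∀ i i' : ℤ,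
      cellIn lam mu r c → cellIn lam mu r' c' →
      i ∈ T r c → i' ∈ T r' c' →
      ((r, c), i) ≠ ((r', c'), i') →
      (i, i + (c : ℤ) - (r : ℤ)) ≠ (i', i' + (c' : ℤ) - (r' : ℤ)) := by
  intro r c r' c' i i' hc hc' hi hi' hne heq
  have h1 : i = i' := (Prod.mk.injEq _ _ _ _ ▸ heq).1
  have h2 : (c : ℤ) - r = (c' : ℤ) - r' := by
    have := (Prod.mk.injEq _ _ _ _ ▸ heq).2
    omega
  rcases lt_trichotomy r r' with hr | hr | hr
  · have hcc : c' = c + (r' - r) := by omega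
    obtain ⟨k, hk⟩ : ∃ k, r' = r + k + 1 := ⟨r' - r - 1, by omega⟩
    have hlt : i < i' := by
      refine diag_strict lam mu hlam hmu T hT k r c hc ?_ i hi i' ?_
      · convert hc' using 2 <;> omega
      · convert hi' using 3 <;> omega
    omega
  · have hcc : c = c' := by omega
    exact hne (by simp [hr, hcc, h1])
  · have hcc : c = c' + (r - r') := by omega
    obtain ⟨k, hk⟩ : ∃ k, r = r' + k + 1 := ⟨r - r' - 1, by omega⟩
    have hlt : i' < i := by
      refine diag_strict lam mu hlam hmu T hT k r' c' hc' ?_ i' hi' i ?_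
      · convert hc using 2 <;> omega
      · convert hi using 3 <;> omega
    omega
end

section
/- The map ω₁ (transpose and replace each value i by 1 − i) restricts to a bijection from semistandard set-valued tableaux of shape λ/μ with positive entries bounded row-wise above by a flag φ (max T(r,c) ≤ φ_r) onto row-strict-decreasing set-valued tableaux of shape λ'/μ' with nonpositive entries bounded column-wise below by the reverse flag 1 − φ (all entries in column j are ≥ 1 − φ_j). -/
def IsSetRSDT (lam mu : ℕ → ℕ) (T : ℕ → ℕ → Finset ℤ) : Prop :=
  (∀ r c, cellIn lam mu r c → (T r c).Nonempty) ∧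
  (∀ r c, ¬ cellIn lam mu r c → T r c = ∅) ∧
  (∀ r c, cellIn lam mu r c → cellIn lam mu r (c + 1) →
    ∀ a ∈ T r c, ∀ b ∈ T r (c + 1), b < a) ∧
  (∀ r c, cellIn lam mu r c → cellIn lam mu (r + 1) c →
    ∀ a ∈ T r c, ∀ b ∈ T (r + 1) c, b ≤ a)

/-- ω₁ restricts to a bijection from positive φ-row-bounded semistandard set-valued
tableaux of shape λ/μ onto nonpositive set-valued row-strict-decreasing tableaux of
shape λ'/μ' whose entries in column j are at least 1 − φ_j. -/
theorem stmt10 (lam mu lam' mu' : ℕ → ℕ) (φ : ℕ → ℤ)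
    (hlam : IsPartitionFn lam) (hmu : IsPartitionFn mu)
    (hsub : ∀ r, mu r ≤ lam r)
    (hφ : ∀ r, φ r ≤ φ (r + 1))
    (hconj : ∀ r c, cellIn lam' mu' r c ↔ cellIn lam mu c r) :
    ∃ f : {T : ℕ → ℕ → Finset ℤ // IsSetSSYT lam mu T ∧
            (∀ r c, ∀ a ∈ T r c, 0 < a) ∧ (∀ r c, ∀ a ∈ T r c, a ≤ φ r)} →
        {T : ℕ → ℕ → Finset ℤ // IsSetRSDT lam' mu' T ∧
            (∀ r c, ∀ a ∈ T r c, a ≤ 0) ∧ (∀ r c, ∀ a ∈ T r c, 1 - φ c ≤ a)},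
      (∀ T, (f T).val = fun r c => (T.val c r).image (fun i => 1 - i)) ∧
      Function.Bijective f := by

  have hinj : Function.Injective (fun i : ℤ => 1 - i) := by
    intro a b h; simpa using h
  have hσσ : ∀ s : Finset ℤ, (s.image (fun i => 1 - i)).image (fun i => 1 - i) = s := by
    intro s
    rw [Finset.image_image]
    have : ((fun i : ℤ => 1 - i) ∘ fun i : ℤ => 1 - i) = id := by
      funext x; simp [Function.comp]
    rw [this, Finset.image_id]
  refine ⟨fun T => ⟨fun r c => (T.val c r).image (fun i => 1 - i), ?_, ?_, ?_⟩, fun T => rfl, ?_, ?_⟩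
  · obtain ⟨⟨hne, hemp, hrow, hcol⟩, hpos, hbd⟩ := T.2
    refine ⟨?_, ?_, ?_, ?_⟩
    · intro r c h
      exact (hne c r ((hconj r c).mp h)).image _
    · intro r c h
      simp [hemp c r (fun hh => h ((hconj r c).mpr hh))]
    · intro r c h1 h2 a ha b hb
      simp only [Finset.mem_image] at ha hb
      obtain ⟨x, hx, rfl⟩ := ha; obtain ⟨y, hy, rfl⟩ := hb
      have := hcol c r ((hconj r c).mp h1) ((hconj r (c+1)).mp h2) x hx y hy
      linarith
    · intro r c h1 h2 a ha b hb
      simp only [Finset.mem_image] at ha hb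
      obtain ⟨x, hx, rfl⟩ := ha; obtain ⟨y, hy, rfl⟩ := hb
      have := hrow c r ((hconj r c).mp h1) ((hconj (r+1) c).mp h2) x hx y hy
      linarith
  · intro r c a ha
    simp only [Finset.mem_image] at ha
    obtain ⟨x, hx, rfl⟩ := ha
    have := T.2.2.1 c r x hx; linarith
  · intro r c a ha
    simp only [Finset.mem_image] at ha
    obtain ⟨x, hx, rfl⟩ := ha
    have := T.2.2.2 c r x hx; linarith
  · intro T1 T2 h
    apply Subtype.ext; funext r c
    have h2 := congrFun (congrFun (congrArg Subtype.val h) c) r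
    simp only at h2
    exact Finset.image_injective hinj h2
  · rintro ⟨S, ⟨hne, hemp, hrow, hcol⟩, hle, hge⟩
    refine ⟨⟨fun r c => (S c r).image (fun i => 1 - i), ⟨?_, ?_, ?_, ?_⟩, ?_, ?_⟩, ?_⟩
    · intro r c h
      exact (hne c r ((hconj c r).mpr h)).image _
    · intro r c h
      simp [hemp c r (fun hh => h ((hconj c r).mp hh))]
    · intro r c h1 h2 a ha b hb
      simp only [Finset.mem_image] at ha hb
      obtain ⟨x, hx, rfl⟩ := ha; obtain ⟨y, hy, rfl⟩ := hb
      have := hcol c r ((hconj c r).mpr h1) ((hconj (c+1) r).mpr h2) x hx y hy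
      linarith
    · intro r c h1 h2 a ha b hb
      simp only [Finset.mem_image] at ha hb
      obtain ⟨x, hx, rfl⟩ := ha; obtain ⟨y, hy, rfl⟩ := hb
      have := hrow c r ((hconj c r).mpr h1) ((hconj c (r+1)).mpr h2) x hx y hy
      linarith
    · intro r c a ha
      simp only [Finset.mem_image] at ha
      obtain ⟨x, hx, rfl⟩ := ha
      have := hle c r x hx; linarith
    · intro r c a ha
      simp only [Finset.mem_image] at ha
      obtain ⟨x, hx, rfl⟩ := ha
      have := hge c r x hx; linarith
    · apply Subtype.ext; funext r c
      simp only
      exact hσσ (S r c)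
end

section
/- With π_i(f) = ∂_i((1+βx_i)f), where ∂_i(f) = (f − s_i·f)/(x_i − x_{i+1}), the operators π_i satisfy the braid relations: π_i π_j = π_j π_i whenever |i − j| > 1, and π_i π_{i+1} π_i = π_{i+1} π_i π_{i+1}. -/
/-!
Clearing denominators, both `Δ · π_i π_{i+1} π_i f` and `Δ · π_{i+1} π_i π_{i+1} f`, with
`Δ = (x_i - x_{i+1})(x_i - x_{i+2})(x_{i+1} - x_{i+2})`, equal the alternating sum over the
permutations `w` of `x_i, x_{i+1}, x_{i+2}` of `w((1 + βx_i)² (1 + βx_{i+1}) f)`: both words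
compute `∂_{w₀}((1 + βx_i)² (1 + βx_{i+1}) f)`. For `|i - j| > 1` the analogous expansion of
`(x_i - x_{i+1})(x_j - x_{j+1}) · π_i π_j f` is symmetric in `i` and `j`. Each expansion is a
linear combination of the defining identity `(x_i - x_{i+1}) π_i f = (1 + βx_i) f -
(1 + βx_{i+1}) s_i f`, its images under permutations of the variables, and the
`s_i`-invariance of `π_i f`.
-/

open MvPolynomial

section

variable {R : Type*} [CommRing R]

theorem X_sub_X_ne_zero [Nontrivial R] {σ : Type*} {i j : σ} (h : i ≠ j) :
    (X i - X j : MvPolynomial σ R) ≠ 0 :=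
  sub_ne_zero.mpr (X_injective.ne h)

noncomputable def swapVars (i : ℕ) : MvPolynomial ℕ R →ₐ[R] MvPolynomial ℕ R :=
  rename (Equiv.swap i (i + 1))

theorem swapVars_X (i k : ℕ) :
    swapVars i (X k : MvPolynomial ℕ R) = X (Equiv.swap i (i + 1) k) :=
  rename_X _ _

@[simp]
theorem swapVars_X_self (i : ℕ) : swapVars i (X i : MvPolynomial ℕ R) = X (i + 1) := by
  rw [swapVars_X, Equiv.swap_apply_left]

@[simp]
theorem swapVars_X_succ (i : ℕ) : swapVars i (X (i + 1) : MvPolynomial ℕ R) = X i := by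
  rw [swapVars_X, Equiv.swap_apply_right]

theorem swapVars_X_of_ne {i k : ℕ} (h₁ : k ≠ i) (h₂ : k ≠ i + 1) :
    swapVars i (X k : MvPolynomial ℕ R) = X k := by
  rw [swapVars_X, Equiv.swap_apply_of_ne_of_ne h₁ h₂]

@[simp]
theorem swapVars_swapVars (i : ℕ) (f : MvPolynomial ℕ R) : swapVars i (swapVars i f) = f := by
  suffices (swapVars i).comp (swapVars i) = AlgHom.id R (MvPolynomial ℕ R) from
    DFunLike.congr_fun this f
  refine algHom_ext fun k => ?_
  simp only [AlgHom.comp_apply, swapVars_X, Equiv.swap_apply_self, AlgHom.id_apply]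

theorem swapVars_comm {i j : ℕ} (hij : i + 1 < j ∨ j + 1 < i) (f : MvPolynomial ℕ R) :
    swapVars i (swapVars j f) = swapVars j (swapVars i f) := by
  suffices (swapVars i).comp (swapVars j) = (swapVars j).comp (swapVars i) from
    DFunLike.congr_fun this f
  refine algHom_ext fun k => ?_
  simp only [AlgHom.comp_apply, swapVars_X, Equiv.swap_apply_def]
  congr 1
  split_ifs <;> omega

theorem swapVars_braid (i : ℕ) (f : MvPolynomial ℕ R) :
    swapVars i (swapVars (i + 1) (swapVars i f)) =
      swapVars (i + 1) (swapVars i (swapVars (i + 1) f)) := by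
  suffices (swapVars i).comp ((swapVars (i + 1)).comp (swapVars i)) =
      (swapVars (i + 1)).comp ((swapVars i).comp (swapVars (i + 1))) from
    DFunLike.congr_fun this f
  refine algHom_ext fun k => ?_
  simp only [AlgHom.comp_apply, swapVars_X, Equiv.swap_apply_def]
  congr 1
  split_ifs <;> omega

/-- Divided by the Vandermonde product of `x_i, x_{i+1}, x_{i+2}`, this is `∂_{w₀} g`. -/
noncomputable def alternant (i : ℕ) (g : MvPolynomial ℕ R) : MvPolynomial ℕ R :=
  g - swapVars i g - swapVars (i + 1) g + swapVars i (swapVars (i + 1) g) +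
    swapVars (i + 1) (swapVars i g) - swapVars i (swapVars (i + 1) (swapVars i g))

def IsIsobaricDivDiff (β : R) (p : ℕ → MvPolynomial ℕ R → MvPolynomial ℕ R) : Prop :=
  ∀ i f, (X i - X (i + 1)) * p i f =
    (1 + C β * X i) * f - (1 + C β * X (i + 1)) * swapVars i f

namespace IsIsobaricDivDiff

variable {β : R} {p : ℕ → MvPolynomial ℕ R → MvPolynomial ℕ R}

theorem of_divDiff {d : ℕ → MvPolynomial ℕ R → MvPolynomial ℕ R}
    (hd : ∀ i f, (X i - X (i + 1)) * d i f = f - swapVars i f)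
    (hp : ∀ i f, p i f = d i ((1 + C β * X i) * f)) : IsIsobaricDivDiff β p := by
  intro i f
  rw [hp, hd, map_mul]
  simp only [map_add, map_one, map_mul, algHom_C, algebraMap_eq, swapVars_X_self]

theorem map (hp : IsIsobaricDivDiff β p) (φ : MvPolynomial ℕ R →ₐ[R] MvPolynomial ℕ R)
    (i : ℕ) (f : MvPolynomial ℕ R) :
    (φ (X i) - φ (X (i + 1))) * φ (p i f) =
      (1 + C β * φ (X i)) * φ f - (1 + C β * φ (X (i + 1))) * φ (swapVars i f) := by
  simpa using congrArg φ (hp i f)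

theorem swapVars_apply [IsDomain R] (hp : IsIsobaricDivDiff β p) (i : ℕ)
    (f : MvPolynomial ℕ R) : swapVars i (p i f) = p i f := by
  have h := hp.map (swapVars i) i f
  simp only [swapVars_X_self, swapVars_X_succ, swapVars_swapVars] at h
  refine mul_left_cancel₀ (X_sub_X_ne_zero (Nat.succ_ne_self i).symm) ?_
  linear_combination -h - hp i f

theorem mul_apply_apply_of_far (hp : IsIsobaricDivDiff β p) {i j : ℕ}
    (hij : i + 1 < j ∨ j + 1 < i) (f : MvPolynomial ℕ R) :
    (X i - X (i + 1)) * (X j - X (j + 1)) * p i (p j f) =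
      (1 + C β * X i) * (1 + C β * X j) * f -
        (1 + C β * X (i + 1)) * (1 + C β * X j) * swapVars i f -
        (1 + C β * X i) * (1 + C β * X (j + 1)) * swapVars j f +
        (1 + C β * X (i + 1)) * (1 + C β * X (j + 1)) * swapVars i (swapVars j f) := by
  have hj := hp.map (swapVars i) j f
  have hij₀ : swapVars i (X j : MvPolynomial ℕ R) = X j :=
    swapVars_X_of_ne (by omega) (by omega)
  have hij₁ : swapVars i (X (j + 1) : MvPolynomial ℕ R) = X (j + 1) :=
    swapVars_X_of_ne (by omega) (by omega)
  simp only [hij₀, hij₁] at hj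
  linear_combination (X j - X (j + 1)) * hp i (p j f) + (1 + C β * X i) * hp j f -
    (1 + C β * X (i + 1)) * hj

theorem comm_of_far [IsDomain R] (hp : IsIsobaricDivDiff β p) {i j : ℕ}
    (hij : i + 1 < j ∨ j + 1 < i) (f : MvPolynomial ℕ R) : p i (p j f) = p j (p i f) := by
  refine mul_left_cancel₀
    (mul_ne_zero (X_sub_X_ne_zero (show i ≠ i + 1 by omega))
      (X_sub_X_ne_zero (show j ≠ j + 1 by omega))) ?_
  rw [hp.mul_apply_apply_of_far hij, mul_comm (X i - _), hp.mul_apply_apply_of_far hij.symm,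
    swapVars_comm hij]
  ring

variable [IsDomain R]

theorem vandermonde_mul_braid_eq_alternant (hp : IsIsobaricDivDiff β p) (i : ℕ)
    (f : MvPolynomial ℕ R) :
    (X i - X (i + 1)) * (X i - X (i + 2)) * (X (i + 1) - X (i + 2)) *
        p i (p (i + 1) (p i f)) =
      alternant i ((1 + C β * X i) ^ 2 * (1 + C β * X (i + 1)) * f) := by
  have e₂σ := hp.map (swapVars i) (i + 1) (p i f)
  have e₁τ := hp.map (swapVars (i + 1)) i f
  have e₁στ := hp.map ((swapVars i).comp (swapVars (i + 1))) i f
  have hi₂ : swapVars i (X (i + 2) : MvPolynomial ℕ R) = X (i + 2) :=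
    swapVars_X_of_ne (by omega) (by omega)
  have hi₂' : swapVars (i + 1) (X i : MvPolynomial ℕ R) = X i :=
    swapVars_X_of_ne (by omega) (by omega)
  simp only [AlgHom.comp_apply, swapVars_X_self, swapVars_X_succ, hi₂, hi₂',
    hp.swapVars_apply] at e₂σ e₁τ e₁στ
  simp only [alternant, map_mul, map_add, map_one, map_pow, algHom_C, algebraMap_eq,
    swapVars_X_self, swapVars_X_succ, hi₂, hi₂']
  linear_combination (X i - X (i + 2)) * (X (i + 1) - X (i + 2)) * hp i (p (i + 1) (p i f)) +
    (X i - X (i + 2)) * (1 + C β * X i) * hp (i + 1) (p i f) -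
    (1 + C β * X (i + 1)) * (X (i + 1) - X (i + 2)) * e₂σ +
    (1 + C β * X i) * (1 + C β * X (i + 1)) * hp i f -
    (1 + C β * X i) * (1 + C β * X (i + 2)) * e₁τ +
    (1 + C β * X (i + 1)) * (1 + C β * X (i + 2)) * e₁στ

theorem vandermonde_mul_braid_succ_eq_alternant (hp : IsIsobaricDivDiff β p) (i : ℕ)
    (f : MvPolynomial ℕ R) :
    (X i - X (i + 1)) * (X i - X (i + 2)) * (X (i + 1) - X (i + 2)) *
        p (i + 1) (p i (p (i + 1) f)) =
      alternant i ((1 + C β * X i) ^ 2 * (1 + C β * X (i + 1)) * f) := by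
  have e₂τ := hp.map (swapVars (i + 1)) i (p (i + 1) f)
  have e₁σ := hp.map (swapVars i) (i + 1) f
  have e₁τσ := hp.map ((swapVars (i + 1)).comp (swapVars i)) (i + 1) f
  have hi₂ : swapVars i (X (i + 2) : MvPolynomial ℕ R) = X (i + 2) :=
    swapVars_X_of_ne (by omega) (by omega)
  have hi₂' : swapVars (i + 1) (X i : MvPolynomial ℕ R) = X i :=
    swapVars_X_of_ne (by omega) (by omega)
  simp only [AlgHom.comp_apply, swapVars_X_self, swapVars_X_succ, hi₂, hi₂',
    hp.swapVars_apply, ← swapVars_braid] at e₂τ e₁σ e₁τσ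
  simp only [alternant, map_mul, map_add, map_one, map_pow, algHom_C, algebraMap_eq,
    swapVars_X_self, swapVars_X_succ, hi₂, hi₂']
  linear_combination (X i - X (i + 1)) * (X i - X (i + 2)) * hp (i + 1) (p i (p (i + 1) f)) +
    (X i - X (i + 2)) * (1 + C β * X (i + 1)) * hp i (p (i + 1) f) -
    (X i - X (i + 1)) * (1 + C β * X (i + 2)) * e₂τ +
    (1 + C β * X i) ^ 2 * hp (i + 1) f -
    (1 + C β * X (i + 1)) ^ 2 * e₁σ +
    (1 + C β * X (i + 2)) ^ 2 * e₁τσ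

theorem braid (hp : IsIsobaricDivDiff β p) (i : ℕ) (f : MvPolynomial ℕ R) :
    p i (p (i + 1) (p i f)) = p (i + 1) (p i (p (i + 1) f)) := by
  refine mul_left_cancel₀ (mul_ne_zero
    (mul_ne_zero (X_sub_X_ne_zero (show i ≠ i + 1 by omega))
      (X_sub_X_ne_zero (show i ≠ i + 2 by omega)))
    (X_sub_X_ne_zero (show i + 1 ≠ i + 2 by omega))) ?_
  rw [hp.vandermonde_mul_braid_eq_alternant, hp.vandermonde_mul_braid_succ_eq_alternant]

end IsIsobaricDivDiff

end

/-- The β-isobaric divided difference operators π_i(f) = ∂_i((1+βx_i)f) satisfy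
the braid relations: π_i π_j = π_j π_i for |i−j| > 1, and
π_i π_{i+1} π_i = π_{i+1} π_i π_{i+1}. -/
theorem stmt19 {R : Type*} [CommRing R] [IsDomain R] (β : R)
    (d : ℕ → MvPolynomial ℕ R → MvPolynomial ℕ R)
    (hd : ∀ i f, (X i - X (i + 1)) * d i f =
      f - rename (⇑(Equiv.swap i (i + 1))) f)
    (p : ℕ → MvPolynomial ℕ R → MvPolynomial ℕ R)
    (hp : ∀ i f, p i f = d i ((1 + C β * X i) * f)) :
    (∀ i j : ℕ, (i + 1 < j ∨ j + 1 < i) → ∀ f, p i (p j f) = p j (p i f)) ∧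
    (∀ i : ℕ, ∀ f, p i (p (i + 1) (p i f)) = p (i + 1) (p i (p (i + 1) f))) := by
  have h : IsIsobaricDivDiff β p := .of_divDiff hd hp
  exact ⟨fun i j hij => h.comm_of_far hij, h.braid⟩
end
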